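/- arXiv:2205.04605 — 2 statements merged into one kernel-verified Lean document; each statement's English description precedes it below -/
import Mathlib

section
/- The exponential mechanism satisfies ε-differential privacy: if a utility function u : D × O → R has sensitivity Δu (i.e., |u(x,o) − u(x',o)| ≤ Δu for all neighboring x, x' and all o in a finite output set O), then the mechanism that outputs o with probability proportional to exp(ε·u(x,o)/(2Δu)) satisfies, for all neighboring x, x' and all o, Pr[M(x)=o] ≤ e^ε · Pr[M(x')=o]. -/
open Finset

/-- The exponential mechanism satisfies `ε`-differential privacy. -/
theorem exponential_mechanism_dp {D O : Type*} [Fintype O] [Nonempty O]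
    (neighbor : D → D → Prop) (hsym : ∀ x x', neighbor x x' → neighbor x' x)
    (u : D → O → ℝ) (Δ ε : ℝ) (hΔ : 0 < Δ) (hε : 0 ≤ ε)
    (hsens : ∀ x x' o, neighbor x x' → |u x o - u x' o| ≤ Δ)
    (x x' : D) (hn : neighbor x x') (o : O) :
    Real.exp (ε * u x o / (2 * Δ)) / (∑ o' : O, Real.exp (ε * u x o' / (2 * Δ))) ≤
      Real.exp ε *
        (Real.exp (ε * u x' o / (2 * Δ)) / (∑ o' : O, Real.exp (ε * u x' o' / (2 * Δ)))) := by
  have key : ∀ a b : D, neighbor a b → ∀ p : O,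
      Real.exp (ε * u a p / (2 * Δ)) ≤ Real.exp (ε/2) * Real.exp (ε * u b p / (2 * Δ)) := by
    intro a b hab p
    rw [← Real.exp_add]
    apply Real.exp_le_exp.2
    have h1 : u a p - u b p ≤ Δ := (abs_le.1 (hsens a b p hab)).2
    have : ε * u a p / (2 * Δ) - ε * u b p / (2 * Δ) ≤ ε/2 := by
      rw [div_sub_div_same, ← mul_sub]
      rw [div_le_div_iff₀ (by positivity) (by norm_num)]
      nlinarith [mul_le_mul_of_nonneg_left h1 hε]
    linarith
  set Sx := ∑ o' : O, Real.exp (ε * u x o' / (2 * Δ)) with hSx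
  set Sx' := ∑ o' : O, Real.exp (ε * u x' o' / (2 * Δ)) with hSx'
  have hSxpos : 0 < Sx := Finset.sum_pos (fun i _ => Real.exp_pos _) univ_nonempty
  have hSx'pos : 0 < Sx' := Finset.sum_pos (fun i _ => Real.exp_pos _) univ_nonempty
  have hnum : Real.exp (ε * u x o / (2 * Δ)) ≤ Real.exp (ε/2) * Real.exp (ε * u x' o / (2 * Δ)) :=
    key x x' hn o
  have hden : Sx' ≤ Real.exp (ε/2) * Sx := by
    rw [hSx, hSx', Finset.mul_sum]
    exact Finset.sum_le_sum fun i _ => key x' x (hsym x x' hn) i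
  have h1 : Real.exp (ε * u x o / (2 * Δ)) / Sx ≤
      Real.exp (ε/2) * Real.exp (ε * u x' o / (2 * Δ)) / Sx :=
    by gcongr
  have h2 : Real.exp (ε * u x' o / (2 * Δ)) / Sx ≤
      Real.exp (ε/2) * (Real.exp (ε * u x' o / (2 * Δ)) / Sx') := by
    rw [mul_div_assoc', div_le_div_iff₀ hSxpos hSx'pos]
    nlinarith [Real.exp_pos (ε * u x' o / (2 * Δ))]
  calc Real.exp (ε * u x o / (2 * Δ)) / Sx
      ≤ Real.exp (ε/2) * (Real.exp (ε * u x' o / (2 * Δ)) / Sx) := by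
        rw [mul_div_assoc', div_le_div_iff₀ hSxpos hSxpos]
        nlinarith [hSxpos]
    _ ≤ Real.exp (ε/2) * (Real.exp (ε/2) * (Real.exp (ε * u x' o / (2 * Δ)) / Sx')) :=
        mul_le_mul_of_nonneg_left h2 (Real.exp_pos _).le
    _ = Real.exp ε * (Real.exp (ε * u x' o / (2 * Δ)) / Sx') := by
        rw [← mul_assoc, ← Real.exp_add]; ring_nf
end

section
/- For the exponential mechanism with integer utilities, the probability of outputting a candidate with utility at most j is at most (A_{≤j}/A_{>j}) · e^{−ε(j*−j)/2} whenever there exists at least one candidate of utility j* > j, where A_{≤j} is the number of candidates with utility ≤ j and A_{>j} ≥ 1 is the number with utility ≥ j*. Precisely: Pr[u(output) ≤ j] ≤ (#{i : u(f_i) ≤ j} / #{i : u(f_i) ≥ j*}) · e^{−ε(j*−j)/2}. -/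
open Finset

/-- For the exponential mechanism with integer utilities, the probability of outputting a
candidate of utility at most `j` is at most
`(#{u ≤ j} / #{u ≥ j*}) · e^{−ε(j*−j)/2}` whenever some candidate has utility at least `j*`. -/
theorem exp_mech_shallow_prob {m : ℕ} (u : Fin m → ℤ) (ε : ℝ) (hε : 0 ≤ ε)
    (j jstar : ℤ) (hjj : j < jstar)
    (hA : 1 ≤ (Finset.univ.filter fun i => jstar ≤ u i).card) :
    (∑ i ∈ Finset.univ.filter (fun i => u i ≤ j), Real.exp (ε * (u i : ℝ) / 2)) /
        (∑ i : Fin m, Real.exp (ε * (u i : ℝ) / 2)) ≤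
      (((Finset.univ.filter fun i => u i ≤ j).card : ℝ) /
          ((Finset.univ.filter fun i => jstar ≤ u i).card : ℝ)) *
        Real.exp (-ε * ((jstar : ℝ) - (j : ℝ)) / 2) := by
  set S := Finset.univ.filter (fun i => u i ≤ j) with hS
  set T := Finset.univ.filter (fun i => jstar ≤ u i) with hT
  have hN : (∑ i ∈ S, Real.exp (ε * (u i : ℝ) / 2)) ≤
      (S.card : ℝ) * Real.exp (ε * (j : ℝ) / 2) := by
    calc (∑ i ∈ S, Real.exp (ε * (u i : ℝ) / 2))
        ≤ ∑ i ∈ S, Real.exp (ε * (j : ℝ) / 2) := by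
          apply Finset.sum_le_sum
          intro i hi
          have hui : u i ≤ j := (Finset.mem_filter.mp hi).2
          have : (u i : ℝ) ≤ (j : ℝ) := by exact_mod_cast hui
          apply Real.exp_le_exp.mpr
          have := mul_le_mul_of_nonneg_left this hε
          linarith
      _ = (S.card : ℝ) * Real.exp (ε * (j : ℝ) / 2) := by
          rw [Finset.sum_const, nsmul_eq_mul]
  have hD : (T.card : ℝ) * Real.exp (ε * (jstar : ℝ) / 2) ≤
      ∑ i : Fin m, Real.exp (ε * (u i : ℝ) / 2) := by
    calc (T.card : ℝ) * Real.exp (ε * (jstar : ℝ) / 2)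
        = ∑ i ∈ T, Real.exp (ε * (jstar : ℝ) / 2) := by
          rw [Finset.sum_const, nsmul_eq_mul]
      _ ≤ ∑ i ∈ T, Real.exp (ε * (u i : ℝ) / 2) := by
          apply Finset.sum_le_sum
          intro i hi
          have hui : jstar ≤ u i := (Finset.mem_filter.mp hi).2
          have : (jstar : ℝ) ≤ (u i : ℝ) := by exact_mod_cast hui
          apply Real.exp_le_exp.mpr
          have := mul_le_mul_of_nonneg_left this hε
          linarith
      _ ≤ ∑ i : Fin m, Real.exp (ε * (u i : ℝ) / 2) := by
          apply Finset.sum_le_sum_of_subset_of_nonneg (Finset.filter_subset _ _)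
          intro i _ _
          exact (Real.exp_pos _).le
  have hTpos : (0:ℝ) < (T.card : ℝ) := by exact_mod_cast hA
  have hDpos : (0:ℝ) < (T.card : ℝ) * Real.exp (ε * (jstar : ℝ) / 2) :=
    mul_pos hTpos (Real.exp_pos _)
  have key : (∑ i ∈ S, Real.exp (ε * (u i : ℝ) / 2)) /
        (∑ i : Fin m, Real.exp (ε * (u i : ℝ) / 2)) ≤
      ((S.card : ℝ) * Real.exp (ε * (j : ℝ) / 2)) /
        ((T.card : ℝ) * Real.exp (ε * (jstar : ℝ) / 2)) :=
    div_le_div₀ (by positivity) hN hDpos hD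
  refine key.trans_eq ?_
  rw [show (-ε * ((jstar:ℝ) - (j:ℝ)) / 2) = ε*(j:ℝ)/2 - ε*(jstar:ℝ)/2 by ring,
    Real.exp_sub, div_mul_div_comm]
end
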